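/- Suppose smooth functions f, g of u satisfy the two first-order relations f'² = (α²f² − A)/(α²f² − β²g²) and g'² = (A − β²g²)/(α²f² − β²g²) with β²g² < A < α²f² pointwise, and suppose f', g' are nonvanishing. Then f and g satisfy the minimality equation of the first-type rotational surface: (g'f'' − f'g'')/(f'² + g'²) = (α²fg' + β²gf')/(α²f² − β²g²). -/

import Mathlib

theorem stmt_18 (α β A : ℝ) (hα : 0 < α) (hβ : 0 < β)
    (f g : ℝ → ℝ) (hf : ContDiff ℝ (⊤ : ℕ∞) f) (hg : ContDiff ℝ (⊤ : ℕ∞) g)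
    (h3 : ∀ u, β ^ 2 * g u ^ 2 < A) (h4 : ∀ u, A < α ^ 2 * f u ^ 2)
    (hf' : ∀ u, deriv f u ≠ 0) (hg' : ∀ u, deriv g u ≠ 0)
    (h1 : ∀ u, deriv f u ^ 2 = (α ^ 2 * f u ^ 2 - A) / (α ^ 2 * f u ^ 2 - β ^ 2 * g u ^ 2))
    (h2 : ∀ u, deriv g u ^ 2 = (A - β ^ 2 * g u ^ 2) / (α ^ 2 * f u ^ 2 - β ^ 2 * g u ^ 2)) :
    ∀ u, (deriv g u * deriv (deriv f) u - deriv f u * deriv (deriv g) u) /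
        (deriv f u ^ 2 + deriv g u ^ 2) =
      (α ^ 2 * f u * deriv g u + β ^ 2 * g u * deriv f u) /
        (α ^ 2 * f u ^ 2 - β ^ 2 * g u ^ 2) := by
  have hf1 : Differentiable ℝ f := hf.differentiable (by simp)
  have hg1 : Differentiable ℝ g := hg.differentiable (by simp)
  have hf2 : Differentiable ℝ (deriv f) :=
    ((contDiff_infty_iff_deriv.mp (hf.of_le (by simp))).2).differentiable (by simp)
  have hg2 : Differentiable ℝ (deriv g) :=
    ((contDiff_infty_iff_deriv.mp (hg.of_le (by simp))).2).differentiable (by simp)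
  intro u
  have hd : (0:ℝ) < α ^ 2 * f u ^ 2 - β ^ 2 * g u ^ 2 := by
    have := h3 u; have := h4 u; linarith
  have hdne : α ^ 2 * f u ^ 2 - β ^ 2 * g u ^ 2 ≠ 0 := ne_of_gt hd
  set a := f u with ha
  set b := g u with hb
  set p := deriv f u with hp
  set q := deriv g u with hq
  set P := deriv (deriv f) u with hP
  set Q := deriv (deriv g) u with hQ
  -- basic HasDerivAt facts
  have hfu : HasDerivAt f p u := (hf1 u).hasDerivAt
  have hgu : HasDerivAt g q u := (hg1 u).hasDerivAt
  have hN : HasDerivAt (fun x => α ^ 2 * f x ^ 2 - A) (α ^ 2 * (2 * a * p)) u := by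
    have h := ((hfu.pow 2).const_mul (α ^ 2)).sub_const A
    simpa [mul_comm, mul_assoc, mul_left_comm] using h
  have hM : HasDerivAt (fun x => A - β ^ 2 * g x ^ 2) (-(β ^ 2 * (2 * b * q))) u := by
    have h := ((hgu.pow 2).const_mul (β ^ 2)).const_sub A
    simpa [mul_comm, mul_assoc, mul_left_comm] using h
  have hD : HasDerivAt (fun x => α ^ 2 * f x ^ 2 - β ^ 2 * g x ^ 2)
      (α ^ 2 * (2 * a * p) - β ^ 2 * (2 * b * q)) u := by
    have h := ((hfu.pow 2).const_mul (α ^ 2)).sub ((hgu.pow 2).const_mul (β ^ 2))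
    simpa [mul_comm, mul_assoc, mul_left_comm, Pi.sub_def] using h
  have hquotf := hN.div hD hdne
  have hquotg := hM.div hD hdne
  have hEqf : (fun x => deriv f x ^ 2)
      = fun x => (α ^ 2 * f x ^ 2 - A) / (α ^ 2 * f x ^ 2 - β ^ 2 * g x ^ 2) := funext h1
  have hEqg : (fun x => deriv g x ^ 2)
      = fun x => (A - β ^ 2 * g x ^ 2) / (α ^ 2 * f x ^ 2 - β ^ 2 * g x ^ 2) := funext h2
  have hfd2 : HasDerivAt (fun x => deriv f x ^ 2) (2 * p * P) u := by
    have h := (hf2 u).hasDerivAt.pow 2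
    simpa [mul_comm, mul_assoc, mul_left_comm, Pi.pow_def] using h
  have hgd2 : HasDerivAt (fun x => deriv g x ^ 2) (2 * q * Q) u := by
    have h := (hg2 u).hasDerivAt.pow 2
    simpa [mul_comm, mul_assoc, mul_left_comm, Pi.pow_def] using h
  have heq1 : 2 * p * P =
      (α ^ 2 * (2 * a * p) * (α ^ 2 * a ^ 2 - β ^ 2 * b ^ 2)
        - (α ^ 2 * a ^ 2 - A) * (α ^ 2 * (2 * a * p) - β ^ 2 * (2 * b * q)))
      / (α ^ 2 * a ^ 2 - β ^ 2 * b ^ 2) ^ 2 := by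
    have h' : HasDerivAt (fun x => deriv f x ^ 2)
        ((α ^ 2 * (2 * a * p) * (α ^ 2 * a ^ 2 - β ^ 2 * b ^ 2)
          - (α ^ 2 * a ^ 2 - A) * (α ^ 2 * (2 * a * p) - β ^ 2 * (2 * b * q)))
        / (α ^ 2 * a ^ 2 - β ^ 2 * b ^ 2) ^ 2) u := by
      rw [hEqf]; exact hquotf
    exact hfd2.unique h'
  have heq2 : 2 * q * Q =
      (-(β ^ 2 * (2 * b * q)) * (α ^ 2 * a ^ 2 - β ^ 2 * b ^ 2)
        - (A - β ^ 2 * b ^ 2) * (α ^ 2 * (2 * a * p) - β ^ 2 * (2 * b * q)))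
      / (α ^ 2 * a ^ 2 - β ^ 2 * b ^ 2) ^ 2 := by
    have h' : HasDerivAt (fun x => deriv g x ^ 2)
        ((-(β ^ 2 * (2 * b * q)) * (α ^ 2 * a ^ 2 - β ^ 2 * b ^ 2)
          - (A - β ^ 2 * b ^ 2) * (α ^ 2 * (2 * a * p) - β ^ 2 * (2 * b * q)))
        / (α ^ 2 * a ^ 2 - β ^ 2 * b ^ 2) ^ 2) u := by
      rw [hEqg]; exact hquotg
    exact hgd2.unique h'
  have e1 : 2 * p * P * (α ^ 2 * a ^ 2 - β ^ 2 * b ^ 2) ^ 2 =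
      α ^ 2 * (2 * a * p) * (α ^ 2 * a ^ 2 - β ^ 2 * b ^ 2)
        - (α ^ 2 * a ^ 2 - A) * (α ^ 2 * (2 * a * p) - β ^ 2 * (2 * b * q)) := by
    rw [heq1, div_mul_cancel₀]
    exact pow_ne_zero 2 hdne
  have e2 : 2 * q * Q * (α ^ 2 * a ^ 2 - β ^ 2 * b ^ 2) ^ 2 =
      -(β ^ 2 * (2 * b * q)) * (α ^ 2 * a ^ 2 - β ^ 2 * b ^ 2)
        - (A - β ^ 2 * b ^ 2) * (α ^ 2 * (2 * a * p) - β ^ 2 * (2 * b * q)) := by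
    rw [heq2, div_mul_cancel₀]
    exact pow_ne_zero 2 hdne
  have hp2 : p ^ 2 * (α ^ 2 * a ^ 2 - β ^ 2 * b ^ 2) = α ^ 2 * a ^ 2 - A := by
    rw [h1 u]; exact div_mul_cancel₀ _ hdne
  have hq2 : q ^ 2 * (α ^ 2 * a ^ 2 - β ^ 2 * b ^ 2) = A - β ^ 2 * b ^ 2 := by
    rw [h2 u]; exact div_mul_cancel₀ _ hdne
  have hsum : p ^ 2 + q ^ 2 = 1 := by
    have h'' : (p ^ 2 + q ^ 2) * (α ^ 2 * a ^ 2 - β ^ 2 * b ^ 2)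
        = 1 * (α ^ 2 * a ^ 2 - β ^ 2 * b ^ 2) := by linear_combination hp2 + hq2
    exact mul_right_cancel₀ hdne h''
  rw [hsum, div_one, eq_div_iff hdne]
  have hne2 : 2 * p * q * (α ^ 2 * a ^ 2 - β ^ 2 * b ^ 2) ≠ 0 := by
    have := hf' u; have := hg' u
    refine mul_ne_zero (mul_ne_zero (mul_ne_zero two_ne_zero ?_) ?_) hdne <;> assumption
  have hmul : 2 * p * q * (α ^ 2 * a ^ 2 - β ^ 2 * b ^ 2) *
      ((q * P - p * Q) * (α ^ 2 * a ^ 2 - β ^ 2 * b ^ 2)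
        - (α ^ 2 * a * q + β ^ 2 * b * p)) = 0 := by
    linear_combination q ^ 2 * e1 - p ^ 2 * e2
      + (q ^ 2 * (2 * α ^ 2 * a * p - 2 * β ^ 2 * b * q)) * hp2
      - (p ^ 2 * (2 * α ^ 2 * a * p - 2 * β ^ 2 * b * q)) * hq2
  have := (mul_eq_zero.mp hmul).resolve_left hne2
  linarith [sub_eq_zero.mp this]
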